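/- Let K : ℕ → ℕ satisfy (K A : ℝ)/A → 0 as A → ∞. For each A ≥ 1, let ρ_A be a probability mass function on a type ι_A and for each r ∈ ι_A let an adaptive K(A)-query strategy on A arms be given. Then there exist A ≥ 1 and i* ∈ Fin A such that the ρ_A-probability that the strategy fails to output i* when run on f_{i*} is at least 1/3. -/

import Mathlib

/-- The transcript of an adaptive query strategy `q` run against reward
function `f` for a given number of steps:
`t₀ = []`, `t_{j+1} = t_j ++ [f (q t_j)]`. -/
def transcript (A : ℕ) (q : List Bool → Fin A) (f : Fin A → Bool) : ℕ → List Bool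
  | 0 => []
  | j + 1 => transcript A q f j ++ [f (q (transcript A q f j))]

/-- The adaptive `K`-query strategy `(q, G)` succeeds on the arm `i` if its
output when run on the reward function `f_i = fun j => decide (j = i)`
equals `i`. -/
def banditSucceeds (A K : ℕ) (q G : List Bool → Fin A) (i : Fin A) : Prop :=
  G (transcript A q (fun j => decide (j = i)) K) = i

/-!
Run a deterministic strategy against the all-`false` reward function. An arm that this run never
queries within `K` steps yields exactly the same transcript as `false` everywhere, so the strategy
can succeed on it only if it is the final guess of that run; hence each deterministic strategy
succeeds on at most `K + 1` arms. Averaging over the randomness, the success probabilities sum to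
at most `K + 1`, so some arm is identified with probability at most `(K + 1) / A`, which is below
`1 / 3` once `A > 3 (K + 1)`, and `K = o(A)` provides such an `A`.
-/

open Finset Filter

lemma transcript_congr {A : ℕ} {q : List Bool → Fin A} {f g : Fin A → Bool} {K : ℕ}
    (h : ∀ j < K, f (q (transcript A q f j)) = g (q (transcript A q f j))) :
    transcript A q f K = transcript A q g K := by
  induction K with
  | zero => rfl
  | succ j ih =>
    have hj : transcript A q f j = transcript A q g j := ih fun k hk => h k (by omega)
    simp only [transcript, ← hj, h j j.lt_succ_self]

open Classical in
lemma card_filter_banditSucceeds_le (A K : ℕ) (q G : List Bool → Fin A) :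
    #{i | banditSucceeds A K q G i} ≤ K + 1 := by
  set t := transcript A q (fun _ => false)
  have hsub : ({i | banditSucceeds A K q G i} : Finset (Fin A)) ⊆
      insert (G (t K)) ((range K).image (q ∘ t)) := by
    intro i hi
    by_cases hq : ∃ j < K, q (t j) = i
    · obtain ⟨j, hj, rfl⟩ := hq
      exact mem_insert_of_mem (mem_image_of_mem _ (mem_range.mpr hj))
    · push Not at hq
      have hsilent : transcript A q (fun j => decide (j = i)) K = t K :=
        (transcript_congr fun j hj => (decide_eq_false (hq j hj)).symm).symm
      have hi' : G (t K) = i := by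
        rwa [mem_filter_univ, banditSucceeds, hsilent] at hi
      exact mem_insert.mpr (Or.inl hi'.symm)
  calc #{i | banditSucceeds A K q G i}
      ≤ #(insert (G (t K)) ((range K).image (q ∘ t))) := card_le_card hsub
    _ ≤ #((range K).image (q ∘ t)) + 1 := card_insert_le _ _
    _ ≤ K + 1 := by grw [card_image_le, card_range]

namespace PMF

variable {ι : Type*} (ρ : PMF ι)

lemma toOuterMeasure_add_compl (s : Set ι) :
    ρ.toOuterMeasure s + ρ.toOuterMeasure sᶜ = 1 := by
  simp only [toOuterMeasure_apply, ← ENNReal.tsum_add, Set.indicator_self_add_compl_apply,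
    ρ.tsum_coe]

open Classical in
lemma sum_toOuterMeasure_le {α : Type*} [Fintype α] (S : α → Set ι) (m : ℕ)
    (h : ∀ r, #{a | r ∈ S a} ≤ m) :
    ∑ a, ρ.toOuterMeasure (S a) ≤ m := by
  calc ∑ a, ρ.toOuterMeasure (S a)
      = ∑' r, (#{a | r ∈ S a} : ENNReal) * ρ r := by
        simp only [toOuterMeasure_apply]
        rw [← Summable.tsum_finsetSum fun _ _ => ENNReal.summable]
        congr 1 with r
        simp only [Set.indicator_apply, ← sum_filter, sum_const, nsmul_eq_mul]
    _ ≤ ∑' r, (m : ENNReal) * ρ r := by gcongr with r; exact_mod_cast h r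
    _ = m := by rw [ENNReal.tsum_mul_left, ρ.tsum_coe, mul_one]

end PMF

lemma exists_card_mul_le_sum {α : Type*} [Fintype α] [Nonempty α] (f : α → ENNReal) :
    ∃ a, Fintype.card α * f a ≤ ∑ b, f b := by
  obtain ⟨a, -, ha⟩ := exists_min_image univ f univ_nonempty
  refine ⟨a, ?_⟩
  simpa using card_nsmul_le_sum univ f (f a) fun b _ => ha b (mem_univ b)

lemma eventually_mul_add_one_lt {K : ℕ → ℕ}
    (hK : Tendsto (fun A : ℕ => (K A : ℝ) / A) atTop (nhds 0)) (c : ℕ) :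
    ∀ᶠ A in atTop, c * (K A + 1) < A := by
  have hlim : Tendsto (fun A : ℕ => c * ((K A : ℝ) / A + 1 / A)) atTop (nhds 0) := by
    simpa using (hK.add tendsto_one_div_atTop_nhds_zero_nat).const_mul (c : ℝ)
  filter_upwards [hlim.eventually (gt_mem_nhds one_pos), eventually_gt_atTop 0] with A hA hA0
  have hA0' : (0 : ℝ) < A := by exact_mod_cast hA0
  rw [← add_div, mul_div_assoc', div_lt_one hA0'] at hA
  exact_mod_cast hA

lemma one_div_three_le_of_add_eq_one {s f : ENNReal} {A m : ℕ} (hsf : s + f = 1)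
    (hs : A * s ≤ m) (hA : 3 * m < A) : 1 / 3 ≤ f := by
  have hA0 : (A : ENNReal) ≠ 0 := by exact_mod_cast (Nat.zero_le _).trans_lt hA |>.ne'
  have h3s : 3 * s ≤ 1 := by
    rw [← ENNReal.mul_le_mul_iff_right hA0 (ENNReal.natCast_ne_top A)]
    calc (A : ENNReal) * (3 * s) = 3 * (A * s) := by ring
      _ ≤ 3 * m := by gcongr
      _ ≤ A * 1 := by norm_cast; omega
  refine ENNReal.div_le_of_le_mul' (ENNReal.le_of_add_le_add_left ENNReal.one_ne_top ?_)
  calc (1 : ENNReal) + 1 ≤ 3 := by norm_num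
    _ = 3 * s + 3 * f := by rw [← mul_add, hsf, mul_one]
    _ ≤ 1 + 3 * f := by gcongr

/-- Proposition A.6: if `K A / A → 0` and, for each `A ≥ 1`,
a randomized adaptive `K A`-query strategy on `A` arms is given (a PMF `ρ A`
on an index type `ι A` with a deterministic strategy `(q A _ r, G A _ r)` for
each index `r`), then there exist `A ≥ 1` and an arm `i : Fin A` on which the
randomized strategy fails with probability at least `1/3`. -/
theorem stmt_3 (K : ℕ → ℕ)
    (hK : Filter.Tendsto (fun A : ℕ => (K A : ℝ) / (A : ℝ)) Filter.atTop (nhds 0))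
    (ι : ℕ → Type*) (ρ : ∀ A, 1 ≤ A → PMF (ι A))
    (q G : ∀ A, 1 ≤ A → ι A → List Bool → Fin A) :
    ∃ A, ∃ hA : 1 ≤ A, ∃ i : Fin A,
      (1 : ENNReal) / 3 ≤
        (ρ A hA).toOuterMeasure
          {r : ι A | ¬ banditSucceeds A (K A) (q A hA r) (G A hA r) i} := by
  obtain ⟨A, hbound⟩ := (eventually_mul_add_one_lt hK 3).exists
  have hA : 1 ≤ A := by omega
  have : Nonempty (Fin A) := ⟨⟨0, hA⟩⟩
  let succeeds (i : Fin A) : Set (ι A) := {r | banditSucceeds A (K A) (q A hA r) (G A hA r) i}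
  have hsum : ∑ i, (ρ A hA).toOuterMeasure (succeeds i) ≤ (K A + 1 : ℕ) :=
    (ρ A hA).sum_toOuterMeasure_le succeeds (K A + 1) fun r =>
      card_filter_banditSucceeds_le A (K A) (q A hA r) (G A hA r)
  obtain ⟨i, hi⟩ := exists_card_mul_le_sum fun i => (ρ A hA).toOuterMeasure (succeeds i)
  refine ⟨A, hA, i, one_div_three_le_of_add_eq_one
    ((ρ A hA).toOuterMeasure_add_compl (succeeds i)) ?_ hbound⟩
  simpa using hi.trans hsum
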